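/- As operators on V_k for every k ≥ 2, one has z_1 · T_1 · y_1 · T_1^{-1} = q · T_1^{-1} · y_1 · T_1^{-1} · z_1. (This is the mixed relation of the braid group of the once-punctured torus; together with the other relations it shows that sending T_i ↦ q^{-1/2} T_i, y_i ↦ −y_i, z_i ↦ (qt)^{-1} z_i defines a representation of the positive submonoid of that braid group.) -/

import Mathlib

noncomputable section

open LinearMap

/-- `T_i⁻¹ = q⁻¹ (T_i + (q − 1))`, the inverse of a Hecke operator. -/
def heckeInv {F : Type*} [Field F] (q : F) {M : Type*} [AddCommGroup M] [Module F M]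
    (t : Module.End F M) : Module.End F M :=
  q⁻¹ • (t + (q - 1) • (1 : Module.End F M))

/-- `TdownTo1 T j = T_{j↘1} = T_{j−1} T_{j−2} ⋯ T_1`. -/
def TdownTo1 {M : Type*} [Monoid M] (T : ℕ → M) : ℕ → M
  | 0 => 1
  | 1 => 1
  | j + 2 => T (j + 1) * TdownTo1 T (j + 1)

/-- `TupFrom1 T j = T_{1↗j} = T_1 T_2 ⋯ T_{j−1}`. -/
def TupFrom1 {M : Type*} [Monoid M] (T : ℕ → M) : ℕ → M
  | 0 => 1
  | 1 => 1
  | j + 2 => TupFrom1 T (j + 1) * T (j + 1)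

/-- The commutator `d₊d₋ − d₋d₊` as an operator on `V (m+1)`. -/
def commDD {F : Type*} [Field F] (V : ℕ → Type*) [∀ k, AddCommGroup (V k)]
    [∀ k, Module F (V k)] (dm : ∀ k, V (k + 1) →ₗ[F] V k)
    (dp : ∀ k, V k →ₗ[F] V (k + 1)) (m : ℕ) : Module.End F (V (m + 1)) :=
  dp m ∘ₗ dm m - dm (m + 1) ∘ₗ dp (m + 1)

/-- The operators `y_i` on `V (m+1)`:
`y_1 = (q^{k−1}(q−1))⁻¹ (d₊d₋ − d₋d₊) T_{k↘1}` (with `k = m+1`) and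
`y_{i+1} = q T_i⁻¹ y_i T_i⁻¹`. -/
def yOp {F : Type*} [Field F] (q : F) (V : ℕ → Type*) [∀ k, AddCommGroup (V k)]
    [∀ k, Module F (V k)] (T : ∀ k, ℕ → Module.End F (V k))
    (dm : ∀ k, V (k + 1) →ₗ[F] V k) (dp : ∀ k, V k →ₗ[F] V (k + 1)) (m : ℕ) :
    ℕ → Module.End F (V (m + 1))
  | 0 => 1
  | 1 => (q ^ m * (q - 1))⁻¹ • (commDD V dm dp m * TdownTo1 (T (m + 1)) (m + 1))
  | i + 2 => q • (heckeInv q (T (m + 1) (i + 1)) * yOp q V T dm dp m (i + 1) *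
      heckeInv q (T (m + 1) (i + 1)))

/-- The operators `z_i` on `V (m+1)`:
`z_1 = (q^k/(1−q)) (d₊*d₋ − d₋d₊*) T*_{k↘1}` (with `k = m+1`) and
`z_{i+1} = q⁻¹ T_i z_i T_i`. -/
def zOp {F : Type*} [Field F] (q : F) (V : ℕ → Type*) [∀ k, AddCommGroup (V k)]
    [∀ k, Module F (V k)] (T : ∀ k, ℕ → Module.End F (V k))
    (dm : ∀ k, V (k + 1) →ₗ[F] V k) (dps : ∀ k, V k →ₗ[F] V (k + 1)) (m : ℕ) :
    ℕ → Module.End F (V (m + 1))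
  | 0 => 1
  | 1 => (q ^ (m + 1) / (1 - q)) •
      (commDD V dm dps m * TdownTo1 (fun i => heckeInv q (T (m + 1) i)) (m + 1))
  | i + 2 => q⁻¹ • (T (m + 1) (i + 1) * zOp q V T dm dps m (i + 1) * T (m + 1) (i + 1))

/-- The defining relations of an action of the Dyck path algebra `𝔸_q` on the family
`V_k`, for operators `T_i : V_k → V_k` (`1 ≤ i ≤ k−1`), `d₋ : V_{k+1} → V_k`,
`d₊ : V_k → V_{k+1}`. -/
def AqRel {F : Type*} [Field F] (q : F) (V : ℕ → Type*) [∀ k, AddCommGroup (V k)]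
    [∀ k, Module F (V k)] (T : ∀ k, ℕ → Module.End F (V k))
    (dm : ∀ k, V (k + 1) →ₗ[F] V k) (dp : ∀ k, V k →ₗ[F] V (k + 1)) : Prop :=
  (∀ k i, 1 ≤ i → i + 1 ≤ k →
    (T k i - 1) * (T k i + q • (1 : Module.End F (V k))) = 0) ∧
  (∀ k i, 1 ≤ i → i + 2 ≤ k →
    T k i * T k (i + 1) * T k i = T k (i + 1) * T k i * T k (i + 1)) ∧
  (∀ k i j, 1 ≤ i → i + 1 ≤ k → 1 ≤ j → j + 1 ≤ k → i + 1 < j →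
    T k i * T k j = T k j * T k i) ∧
  (∀ m, dm m ∘ₗ dm (m + 1) ∘ₗ (T (m + 2) (m + 1) : V (m + 2) →ₗ[F] V (m + 2)) =
    dm m ∘ₗ dm (m + 1)) ∧
  (∀ m i, 1 ≤ i → i ≤ m →
    (T (m + 1) i : V (m + 1) →ₗ[F] V (m + 1)) ∘ₗ dm (m + 1) =
      dm (m + 1) ∘ₗ (T (m + 2) i : V (m + 2) →ₗ[F] V (m + 2))) ∧
  (∀ m, (T (m + 2) 1 : V (m + 2) →ₗ[F] V (m + 2)) ∘ₗ dp (m + 1) ∘ₗ dp m =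
    dp (m + 1) ∘ₗ dp m) ∧
  (∀ m i, 1 ≤ i → i ≤ m →
    dp (m + 1) ∘ₗ (T (m + 1) i : V (m + 1) →ₗ[F] V (m + 1)) =
      (T (m + 2) (i + 1) : V (m + 2) →ₗ[F] V (m + 2)) ∘ₗ dp (m + 1)) ∧
  (∀ m, dm (m + 1) ∘ₗ (commDD V dm dp (m + 1) : V (m + 2) →ₗ[F] V (m + 2)) ∘ₗ
      (T (m + 2) (m + 1) : V (m + 2) →ₗ[F] V (m + 2)) =
    q • ((commDD V dm dp m : V (m + 1) →ₗ[F] V (m + 1)) ∘ₗ dm (m + 1))) ∧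
  (∀ m, (T (m + 2) 1 : V (m + 2) →ₗ[F] V (m + 2)) ∘ₗ
      (commDD V dm dp (m + 1) : V (m + 2) →ₗ[F] V (m + 2)) ∘ₗ dp (m + 1) =
    q • (dp (m + 1) ∘ₗ (commDD V dm dp m : V (m + 1) →ₗ[F] V (m + 1))))

/-- The intertwining relations between an action of `𝔸_q` (with `d₊`) and an action of
`𝔸_{q⁻¹}` (with `d₊*`): `d₊ z_i = z_{i+1} d₊`, `d₊* y_i = y_{i+1} d₊*` for `1 ≤ i ≤ k`,
and `z_1 d₊ = −t q^{k+1} y_1 d₊* : V_k → V_{k+1}`. -/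
def IntertwineRel {F : Type*} [Field F] (q t : F) (V : ℕ → Type*)
    [∀ k, AddCommGroup (V k)] [∀ k, Module F (V k)]
    (T : ∀ k, ℕ → Module.End F (V k)) (dm : ∀ k, V (k + 1) →ₗ[F] V k)
    (dp dps : ∀ k, V k →ₗ[F] V (k + 1)) : Prop :=
  (∀ m i, 1 ≤ i → i ≤ m + 1 →
    dp (m + 1) ∘ₗ (zOp q V T dm dps m i : V (m + 1) →ₗ[F] V (m + 1)) =
      (zOp q V T dm dps (m + 1) (i + 1) : V (m + 2) →ₗ[F] V (m + 2)) ∘ₗ dp (m + 1)) ∧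
  (∀ m i, 1 ≤ i → i ≤ m + 1 →
    dps (m + 1) ∘ₗ (yOp q V T dm dp m i : V (m + 1) →ₗ[F] V (m + 1)) =
      (yOp q V T dm dp (m + 1) (i + 1) : V (m + 2) →ₗ[F] V (m + 2)) ∘ₗ dps (m + 1)) ∧
  (∀ m, (zOp q V T dm dps m 1 : V (m + 1) →ₗ[F] V (m + 1)) ∘ₗ dp m =
    (-(t * q ^ (m + 1))) •
      ((yOp q V T dm dp m 1 : V (m + 1) →ₗ[F] V (m + 1)) ∘ₗ dps m))

/-- A pair of correctly intertwined actions of `𝔸_q` and `𝔸_{q⁻¹}`: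
`(T, d₋, d₊)` satisfies the relations of `𝔸_q`, `(T⁻¹, d₋, d₊*)` satisfies the relations
of `𝔸_{q⁻¹}`, and the two are correctly intertwined. -/
def CorrectlyIntertwined {F : Type*} [Field F] (q t : F) (V : ℕ → Type*)
    [∀ k, AddCommGroup (V k)] [∀ k, Module F (V k)]
    (T : ∀ k, ℕ → Module.End F (V k)) (dm : ∀ k, V (k + 1) →ₗ[F] V k)
    (dp dps : ∀ k, V k →ₗ[F] V (k + 1)) : Prop :=
  AqRel q V T dm dp ∧
  AqRel q⁻¹ V (fun k i => heckeInv q (T k i)) dm dps ∧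
  IntertwineRel q t V T dm dp dps

/-- The field `ℚ(q,t)` of rational functions in two variables over `ℚ`. -/
abbrev Fqt : Type := FractionRing (MvPolynomial (Fin 2) ℚ)

/-- The element `q` of `ℚ(q,t)`. -/
def qv : Fqt := algebraMap (MvPolynomial (Fin 2) ℚ) Fqt (MvPolynomial.X 0)

/-- The element `t` of `ℚ(q,t)`. -/
def tv : Fqt := algebraMap (MvPolynomial (Fin 2) ℚ) Fqt (MvPolynomial.X 1)

/-! With `φ = d₊d₋ − d₋d₊` and `φ* = d₊*d₋ − d₋d₊*` we have `y₁ = c·φ·T_{k↘1}`,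
`z₁ = c*·φ*·T*_{k↘1}`, and `T_{k↘1} = W·T₁` with `W = T_{k−1} ⋯ T₂`. Two exchange rules for
`z₁` give the relation. First, `z₁` commutes with every `T_i`, `i ≥ 2` (hence with `W`), since
`T_iφ* = φ*T_{i−1}` and `T_{i−1}T*_{k↘1} = T*_{k↘1}T_i`. Second, `z₁T₁φ = q·T₁⁻¹φz₁`: expand `φ`
and move `z₁` past `d₋` (`z₁d₋ = d₋z₁`) and past `d₊` (`z₁T₁ = q·T₁⁻¹z₂` and `z₂d₊ = d₊z₁`).
Hence `z₁T₁y₁T₁⁻¹ = c·z₁T₁φW = c·q·T₁⁻¹φWz₁ = q·T₁⁻¹y₁T₁⁻¹z₁`. -/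

section Words

variable {M : Type*} [Monoid M]

theorem TdownTo1_succ (T : ℕ → M) {n : ℕ} (hn : 1 ≤ n) :
    TdownTo1 T (n + 1) = T n * TdownTo1 T n := by
  obtain ⟨n, rfl⟩ := Nat.exists_eq_add_of_le' hn
  rfl

theorem TdownTo1_succ_eq_mul (T : ℕ → M) : ∀ {n : ℕ}, 1 ≤ n →
    TdownTo1 T (n + 1) = TdownTo1 (fun i => T (i + 1)) n * T 1
  | 1, _ => by simp [TdownTo1]
  | n + 2, _ => by
    rw [TdownTo1, TdownTo1_succ_eq_mul T (by omega : 1 ≤ n + 1), TdownTo1, mul_assoc]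

theorem Commute.TdownTo1_right {a : M} {T : ℕ → M} : ∀ {n : ℕ},
    (∀ i, 1 ≤ i → i < n → Commute a (T i)) → Commute a (TdownTo1 T n)
  | 0, _ => Commute.one_right a
  | 1, _ => Commute.one_right a
  | _ + 2, h => (h _ le_add_self (by omega)).mul_right
      (Commute.TdownTo1_right fun i hi hin => h i hi (by omega))

theorem braid_mul_inv_mul_inv {s u s' u' : M} (hb : s * u * s = u * s * u)
    (hss' : s * s' = 1) (hs's : s' * s = 1) (huu' : u * u' = 1) (hu'u : u' * u = 1) :
    s * (u' * s') = u' * s' * u := by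
  have hus : u * s * u' = s' * u * s := by
    calc u * s * u' = s' * (s * u * s) * u' := by
          simp only [mul_assoc, ← mul_assoc s' s, hs's, one_mul]
      _ = s' * u * s := by rw [hb]; simp only [mul_assoc, huu', mul_one]
  calc s * (u' * s') = u' * (u * s * u') * s' := by
        simp only [mul_assoc, ← mul_assoc u' u, hu'u, one_mul]
    _ = u' * s' * u := by rw [hus]; simp only [mul_assoc, hss', mul_one]

end Words

section HeckeOperators

variable {F : Type*} [Field F] {q : F} {M N : Type*} [AddCommGroup M] [Module F M]
  [AddCommGroup N] [Module F N]

theorem Commute.heckeInv_right {a b : Module.End F M} (h : Commute a b) :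
    Commute a (heckeInv q b) :=
  (h.add_right ((Commute.one_right a).smul_right _)).smul_right _

theorem mul_heckeInv_of_quadratic (hq : q ≠ 0) {s : Module.End F M}
    (hs : (s - 1) * (s + q • 1) = 0) : s * heckeInv q s = 1 := by
  have hs' : s * (s + (q - 1) • 1) = q • 1 := by
    rw [← sub_eq_zero, ← hs]
    simp only [mul_add, sub_mul, mul_smul_comm, one_mul, mul_one]
    module
  rw [heckeInv, mul_smul_comm, hs', smul_smul, inv_mul_cancel₀ hq, one_smul]

theorem heckeInv_mul_of_quadratic (hq : q ≠ 0) {s : Module.End F M}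
    (hs : (s - 1) * (s + q • 1) = 0) : heckeInv q s * s = 1 := by
  rw [← (Commute.refl s).heckeInv_right.eq, mul_heckeInv_of_quadratic hq hs]

theorem heckeInv_comp_eq_comp_heckeInv_iff (hq : q ≠ 0) {a : Module.End F N}
    {b : Module.End F M} {f : M →ₗ[F] N} :
    heckeInv q a ∘ₗ f = f ∘ₗ heckeInv q b ↔ a ∘ₗ f = f ∘ₗ b := by
  simp only [heckeInv, LinearMap.smul_comp, LinearMap.comp_smul, LinearMap.add_comp,
    LinearMap.comp_add, Module.End.one_eq_id, LinearMap.id_comp, LinearMap.comp_id]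
  rw [smul_right_inj (inv_ne_zero hq), add_left_inj]

theorem TdownTo1_comp_eq_comp_TdownTo1 {S : ℕ → Module.End F M} {S' : ℕ → Module.End F N}
    {f : M →ₗ[F] N} : ∀ {n : ℕ}, (∀ i, 1 ≤ i → i < n → S' i ∘ₗ f = f ∘ₗ S i) →
    TdownTo1 S' n ∘ₗ f = f ∘ₗ TdownTo1 S n
  | 0, _ => rfl
  | 1, _ => rfl
  | n + 2, h => by
    rw [TdownTo1, TdownTo1, Module.End.mul_eq_comp, Module.End.mul_eq_comp,
      LinearMap.comp_assoc, TdownTo1_comp_eq_comp_TdownTo1 fun i hi hin => h i hi (by omega),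
      ← LinearMap.comp_assoc, h (n + 1) le_add_self (by omega), LinearMap.comp_assoc]

theorem mul_TdownTo1_heckeInv {T : ℕ → Module.End F M} {k : ℕ} (hq : q ≠ 0)
    (hquad : ∀ i, 1 ≤ i → i + 1 ≤ k → (T i - 1) * (T i + q • (1 : Module.End F M)) = 0)
    (hbraid : ∀ i, 1 ≤ i → i + 2 ≤ k → T i * T (i + 1) * T i = T (i + 1) * T i * T (i + 1))
    (hcomm : ∀ i j, 1 ≤ i → i + 1 ≤ k → 1 ≤ j → j + 1 ≤ k → i + 1 < j →
      T i * T j = T j * T i)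
    {j n : ℕ} (hj : 1 ≤ j) (hjn : j + 2 ≤ n) (hnk : n ≤ k) :
    T j * TdownTo1 (fun i => heckeInv q (T i)) n =
      TdownTo1 (fun i => heckeInv q (T i)) n * T (j + 1) := by
  induction n, hjn using Nat.le_induction with
  | base =>
    have hbraid_inv : T j * (heckeInv q (T (j + 1)) * heckeInv q (T j)) =
        heckeInv q (T (j + 1)) * heckeInv q (T j) * T (j + 1) :=
      braid_mul_inv_mul_inv (hbraid j hj (by omega))
        (mul_heckeInv_of_quadratic hq (hquad j hj (by omega)))
        (heckeInv_mul_of_quadratic hq (hquad j hj (by omega)))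
        (mul_heckeInv_of_quadratic hq (hquad (j + 1) (by omega) (by omega)))
        (heckeInv_mul_of_quadratic hq (hquad (j + 1) (by omega) (by omega)))
    have hW : Commute (T (j + 1)) (TdownTo1 (fun i => heckeInv q (T i)) j) :=
      Commute.TdownTo1_right fun i hi hij =>
        Commute.heckeInv_right
          (Commute.symm (hcomm i (j + 1) hi (by omega) (by omega) (by omega) (by omega)))
    rw [TdownTo1_succ _ (by omega), TdownTo1_succ _ hj]
    simp only [← mul_assoc]
    rw [mul_assoc (T j), hbraid_inv, mul_assoc _ (T (j + 1)), hW.eq, ← mul_assoc]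
  | succ n hn ih =>
    have hc : Commute (T j) (heckeInv q (T n)) :=
      Commute.heckeInv_right (hcomm j n hj (by omega) (by omega) (by omega) (by omega))
    rw [TdownTo1_succ _ (by omega), ← mul_assoc, hc.eq, mul_assoc, ih (by omega), mul_assoc]

end HeckeOperators

section DyckPathActions

variable {F : Type*} [Field F] {q t : F} {V : ℕ → Type*} [∀ k, AddCommGroup (V k)]
  [∀ k, Module F (V k)] {T : ∀ k, ℕ → Module.End F (V k)} {dm : ∀ k, V (k + 1) →ₗ[F] V k}
  {dp dps : ∀ k, V k →ₗ[F] V (k + 1)}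

namespace AqRel

theorem mul_heckeInv (h : AqRel q V T dm dp) (hq : q ≠ 0) {k i : ℕ} (hi : 1 ≤ i)
    (hik : i + 1 ≤ k) : T k i * heckeInv q (T k i) = 1 :=
  mul_heckeInv_of_quadratic hq (h.1 k i hi hik)

theorem heckeInv_mul (h : AqRel q V T dm dp) (hq : q ≠ 0) {k i : ℕ} (hi : 1 ≤ i)
    (hik : i + 1 ≤ k) : heckeInv q (T k i) * T k i = 1 :=
  heckeInv_mul_of_quadratic hq (h.1 k i hi hik)

theorem T_dm_apply (h : AqRel q V T dm dp) {m i : ℕ} (hi : 1 ≤ i) (him : i ≤ m)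
    (x : V (m + 2)) : T (m + 1) i (dm (m + 1) x) = dm (m + 1) (T (m + 2) i x) :=
  LinearMap.congr_fun (h.2.2.2.2.1 m i hi him) x

theorem dp_T_apply (h : AqRel q V T dm dp) {m i : ℕ} (hi : 1 ≤ i) (him : i ≤ m)
    (x : V (m + 1)) : dp (m + 1) (T (m + 1) i x) = T (m + 2) (i + 1) (dp (m + 1) x) :=
  LinearMap.congr_fun (h.2.2.2.2.2.2.1 m i hi him) x

theorem dm_commDD_T_apply (h : AqRel q V T dm dp) (m : ℕ) (x : V (m + 2)) :
    dm (m + 1) (commDD V dm dp (m + 1) (T (m + 2) (m + 1) x)) =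
      q • commDD V dm dp m (dm (m + 1) x) :=
  LinearMap.congr_fun (h.2.2.2.2.2.2.2.1 m) x

theorem T_succ_mul_commDD (h : AqRel q V T dm dp) {m j : ℕ} (hj : 1 ≤ j) (hjm : j ≤ m) :
    T (m + 2) (j + 1) * commDD V dm dp (m + 1) = commDD V dm dp (m + 1) * T (m + 2) j := by
  ext x
  simp only [Module.End.mul_apply, commDD, LinearMap.sub_apply, LinearMap.comp_apply, map_sub]
  rw [← h.dp_T_apply hj hjm, h.T_dm_apply hj hjm, h.T_dm_apply (by omega) (by omega),
    h.dp_T_apply hj (by omega)]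

theorem mul_TdownTo1_heckeInv (h : AqRel q V T dm dp) (hq : q ≠ 0) {k j n : ℕ} (hj : 1 ≤ j)
    (hjn : j + 2 ≤ n) (hnk : n ≤ k) :
    T k j * TdownTo1 (fun i => heckeInv q (T k i)) n =
      TdownTo1 (fun i => heckeInv q (T k i)) n * T k (j + 1) :=
  _root_.mul_TdownTo1_heckeInv hq (h.1 k) (h.2.1 k) (h.2.2.1 k) hj hjn hnk

end AqRel

theorem T_succ_mul_commDD_star (hq : q ≠ 0)
    (hs : AqRel q⁻¹ V (fun k i => heckeInv q (T k i)) dm dps) {m j : ℕ} (hj : 1 ≤ j)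
    (hjm : j ≤ m) :
    T (m + 2) (j + 1) * commDD V dm dps (m + 1) = commDD V dm dps (m + 1) * T (m + 2) j := by
  have h := hs.T_succ_mul_commDD hj hjm
  rwa [Module.End.mul_eq_comp, Module.End.mul_eq_comp, heckeInv_comp_eq_comp_heckeInv_iff hq]
    at h

theorem zOp_one_dm_apply (hq : q ≠ 0)
    (hs : AqRel q⁻¹ V (fun k i => heckeInv q (T k i)) dm dps) (m : ℕ) (x : V (m + 2)) :
    zOp q V T dm dps m 1 (dm (m + 1) x) = dm (m + 1) (zOp q V T dm dps (m + 1) 1 x) := by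
  have hW : TdownTo1 (fun i => heckeInv q (T (m + 1) i)) (m + 1) ∘ₗ dm (m + 1) =
      dm (m + 1) ∘ₗ TdownTo1 (fun i => heckeInv q (T (m + 2) i)) (m + 1) :=
    TdownTo1_comp_eq_comp_TdownTo1 fun i hi him => hs.2.2.2.2.1 m i hi (by omega)
  have hφ (y : V (m + 2)) : commDD V dm dps m (dm (m + 1) y) =
      q • dm (m + 1) (commDD V dm dps (m + 1) (heckeInv q (T (m + 2) (m + 1)) y)) := by
    rw [hs.dm_commDD_T_apply, smul_smul, mul_inv_cancel₀ hq, one_smul]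
  simp only [zOp, TdownTo1_succ _ (by omega : 1 ≤ m + 1), LinearMap.smul_apply,
    Module.End.mul_apply, map_smul]
  rw [← LinearMap.comp_apply (f := TdownTo1 _ _), hW, LinearMap.comp_apply, hφ, smul_smul,
    div_mul_eq_mul_div, ← pow_succ]

theorem IntertwineRel.dp_zOp_apply (h : IntertwineRel q t V T dm dp dps) {m i : ℕ}
    (hi : 1 ≤ i) (him : i ≤ m + 1) (x : V (m + 1)) :
    dp (m + 1) (zOp q V T dm dps m i x) = zOp q V T dm dps (m + 1) (i + 1) (dp (m + 1) x) :=
  LinearMap.congr_fun (h.1 m i hi him) x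

theorem zOp_one_mul_T_one (hq : q ≠ 0) (h : AqRel q V T dm dp) {m : ℕ} (hm : 1 ≤ m) :
    zOp q V T dm dps m 1 * T (m + 1) 1 =
      q • (heckeInv q (T (m + 1) 1) * zOp q V T dm dps m 2) := by
  rw [show zOp q V T dm dps m 2 = q⁻¹ • (T (m + 1) 1 * zOp q V T dm dps m 1 * T (m + 1) 1)
    from rfl, mul_smul_comm, smul_smul, mul_inv_cancel₀ hq, one_smul, ← mul_assoc, ← mul_assoc,
    h.heckeInv_mul hq le_rfl (by omega), one_mul]

theorem zOp_one_T_one_apply (hq : q ≠ 0) (h : AqRel q V T dm dp) {m : ℕ} (hm : 1 ≤ m)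
    (x : V (m + 1)) :
    zOp q V T dm dps m 1 (T (m + 1) 1 x) =
      q • heckeInv q (T (m + 1) 1) (zOp q V T dm dps m 2 x) :=
  LinearMap.congr_fun (zOp_one_mul_T_one hq h hm) x

theorem zOp_one_T_one_commDD (hq : q ≠ 0) (h : CorrectlyIntertwined q t V T dm dp dps)
    (m : ℕ) :
    zOp q V T dm dps (m + 1) 1 * T (m + 2) 1 * commDD V dm dp (m + 1) =
      q • (heckeInv q (T (m + 2) 1) * commDD V dm dp (m + 1) * zOp q V T dm dps (m + 1) 1) := by
  obtain ⟨hA, hA', hI⟩ := h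
  ext x
  simp only [Module.End.mul_apply, LinearMap.smul_apply, commDD, LinearMap.sub_apply,
    LinearMap.comp_apply, map_sub, smul_sub]
  rw [zOp_one_T_one_apply hq hA (by omega), ← hI.dp_zOp_apply le_rfl (by omega),
    zOp_one_dm_apply hq hA', hA.T_dm_apply le_rfl (by omega), zOp_one_dm_apply hq hA',
    zOp_one_T_one_apply hq hA (by omega), ← hI.dp_zOp_apply le_rfl (by omega), map_smul,
    ← hA'.T_dm_apply le_rfl (by omega)]

theorem commute_zOp_one_T (hq : q ≠ 0) (h : AqRel q V T dm dp)
    (hs : AqRel q⁻¹ V (fun k i => heckeInv q (T k i)) dm dps) {m i : ℕ} (hi : 2 ≤ i)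
    (him : i ≤ m + 1) : Commute (zOp q V T dm dps (m + 1) 1) (T (m + 2) i) := by
  obtain ⟨j, rfl⟩ : ∃ j, i = j + 1 := ⟨i - 1, by omega⟩
  change zOp q V T dm dps (m + 1) 1 * T (m + 2) (j + 1) =
    T (m + 2) (j + 1) * zOp q V T dm dps (m + 1) 1
  rw [zOp, smul_mul_assoc, mul_smul_comm, mul_assoc,
    ← h.mul_TdownTo1_heckeInv hq (by omega) (by omega) le_rfl, ← mul_assoc,
    ← T_succ_mul_commDD_star hq hs (by omega) (by omega), mul_assoc]

theorem CorrectlyIntertwined.mixed_braid (hq : q ≠ 0)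
    (h : CorrectlyIntertwined q t V T dm dp dps) (m : ℕ) :
    zOp q V T dm dps (m + 1) 1 * T (m + 2) 1 * yOp q V T dm dp (m + 1) 1 *
        heckeInv q (T (m + 2) 1) =
      q • (heckeInv q (T (m + 2) 1) * yOp q V T dm dp (m + 1) 1 *
        heckeInv q (T (m + 2) 1) * zOp q V T dm dps (m + 1) 1) := by
  set z := zOp q V T dm dps (m + 1) 1
  set s := T (m + 2) 1
  set s' := heckeInv q s
  set φ := commDD V dm dp (m + 1)
  set W := TdownTo1 (fun i => T (m + 2) (i + 1)) (m + 1)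
  set c := (q ^ (m + 1) * (q - 1))⁻¹
  have hy : yOp q V T dm dp (m + 1) 1 = c • (φ * (W * s)) := by
    rw [yOp, TdownTo1_succ_eq_mul _ (by omega)]
  have hss' : s * s' = 1 := h.1.mul_heckeInv hq le_rfl (by omega)
  have hzW : Commute z W := Commute.TdownTo1_right fun i hi him =>
    commute_zOp_one_T hq h.1 h.2.1 (by omega) (by omega)
  have hkey : z * s * φ = q • (s' * φ * z) := zOp_one_T_one_commDD hq h m
  rw [hy]
  calc z * s * (c • (φ * (W * s))) * s' = c • (z * s * φ * W * (s * s')) := by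
        simp only [mul_smul_comm, smul_mul_assoc, mul_assoc]
    _ = c • (q • (s' * φ * (W * z))) := by
        rw [hss', mul_one, hkey, smul_mul_assoc, ← hzW.eq]
        simp only [mul_assoc]
    _ = q • (s' * (c • (φ * (W * s))) * s' * z) := by
        rw [smul_comm]
        simp only [mul_smul_comm, smul_mul_assoc, mul_assoc, hss', one_mul]

end DyckPathActions

theorem qv_ne_zero : qv ≠ 0 :=
  (map_ne_zero_iff _ (IsFractionRing.injective _ _)).mpr (MvPolynomial.X_ne_zero 0)

/-- The mixed relation of the braid group of the once-punctured torus: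
`z_1 T_1 y_1 T_1⁻¹ = q T_1⁻¹ y_1 T_1⁻¹ z_1` as operators on `V_k` for every `k ≥ 2`
(here `k = m+2`). -/
theorem mixed_braid_relation (V : ℕ → Type*) [∀ k, AddCommGroup (V k)]
    [∀ k, Module Fqt (V k)] (T : ∀ k, ℕ → Module.End Fqt (V k))
    (dm : ∀ k, V (k + 1) →ₗ[Fqt] V k) (dp dps : ∀ k, V k →ₗ[Fqt] V (k + 1))
    (h : CorrectlyIntertwined qv tv V T dm dp dps) :
    ∀ m, zOp qv V T dm dps (m + 1) 1 * T (m + 2) 1 * yOp qv V T dm dp (m + 1) 1 *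
          heckeInv qv (T (m + 2) 1) =
        qv • (heckeInv qv (T (m + 2) 1) * yOp qv V T dm dp (m + 1) 1 *
          heckeInv qv (T (m + 2) 1) * zOp qv V T dm dps (m + 1) 1) :=
  h.mixed_braid qv_ne_zero
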